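/- Let f : ℝ^d → ℝ be continuous, M compact and connected with f constant equal to f_M on M, A_M a connected component of {x : f(x) ≥ λ_M} containing B(M, r_M) with λ_M < f_M, and suppose f(x) < f_M for x ∈ A_M \ M. Define g(t) := sup_{x ∈ {f ≥ f_M - t} ∩ A_M} d(x, M) for t ∈ [0, (f_M - λ_M)/2]. Then g(0) = 0 and g is nondecreasing, and for any continuous strictly increasing l with l(g(t)) ≤ t for all t, one has f_M - f(x) ≥ l(d(x,M)) for all x ∈ B(M, r_M). -/

import Mathlib

/-!
Write `g t` for the largest distance to `M` of a point of `A` where `f ≥ f_M - t`. Since `M` is a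
strict maximum of `f` on `A`, the level `t = 0` only sees `M` itself, so `g 0 = 0`, and `g` grows
with `t` because the superlevel sets do. Every `x ∈ A` lies in the superlevel set of its own level
`t = f_M - f x`, so `d(x, M) ≤ g (f_M - f x)`; applying the monotone `l` and `l ∘ g ≤ id` gives
`l (d(x, M)) ≤ f_M - f x`.
-/

open Metric Set

lemma Real.sSup_le_sSup_of_nonneg {s t : Set ℝ} (ht : BddAbove t) (ht₀ : ∀ x ∈ t, 0 ≤ x)
    (hst : s ⊆ t) : sSup s ≤ sSup t := by
  -- nonnegativity replaces nonemptiness because `sSup ∅ = 0` in `ℝ`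
  rcases s.eq_empty_or_nonempty with rfl | hs
  · simpa using Real.sSup_nonneg ht₀
  · exact csSup_le_csSup ht hs hst

section LocalMax

variable {X : Type*} {f : X → ℝ} {M A : Set X} {c : ℝ}

lemma le_of_eq_on_of_lt_on_diff (hconst : ∀ x ∈ M, f x = c) (hmax : ∀ x ∈ A \ M, f x < c)
    {x : X} (hx : x ∈ A) : f x ≤ c := by
  by_cases hxM : x ∈ M
  · exact (hconst x hxM).le
  · exact (hmax x ⟨hx, hxM⟩).le

lemma setOf_le_inter_eq_of_lt_on_diff (hMA : M ⊆ A) (hconst : ∀ x ∈ M, f x = c)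
    (hmax : ∀ x ∈ A \ M, f x < c) : {x | c ≤ f x} ∩ A = M := by
  refine Subset.antisymm ?_ fun x hx => ⟨(hconst x hx).ge, hMA hx⟩
  rintro x ⟨hcx, hxA⟩
  by_contra hxM
  exact (hmax x ⟨hxA, hxM⟩).not_ge hcx

end LocalMax

section SuperlevelRadius

variable {X : Type*} [PseudoMetricSpace X]

/-- The function `g` of the paper, with `c = f_M`. -/
noncomputable def superlevelRadius (f : X → ℝ) (M A : Set X) (c t : ℝ) : ℝ :=
  sSup ((infDist · M) '' ({x | c - t ≤ f x} ∩ A))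

variable {f : X → ℝ} {M A : Set X} {c : ℝ}

lemma bddAbove_infDist_image (hA : Bornology.IsBounded A) {s : Set X} (hs : s ⊆ A) :
    BddAbove ((infDist · M) '' s) :=
  ((lipschitz_infDist_pt M).isBounded_image hA).bddAbove.mono (image_mono hs)

lemma superlevelRadius_zero (hMA : M ⊆ A) (hconst : ∀ x ∈ M, f x = c)
    (hmax : ∀ x ∈ A \ M, f x < c) : superlevelRadius f M A c 0 = 0 := by
  rw [superlevelRadius, sub_zero, setOf_le_inter_eq_of_lt_on_diff hMA hconst hmax]
  refine le_antisymm (Real.sSup_nonpos ?_) (Real.sSup_nonneg ?_)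
  · rintro _ ⟨x, hx, rfl⟩
    exact (infDist_zero_of_mem hx).le
  · rintro _ ⟨x, -, rfl⟩
    exact infDist_nonneg

lemma superlevelRadius_mono (hA : Bornology.IsBounded A) :
    Monotone (superlevelRadius f M A c) := by
  intro t₁ t₂ ht
  refine Real.sSup_le_sSup_of_nonneg (bddAbove_infDist_image hA inter_subset_right) ?_ ?_
  · rintro _ ⟨x, -, rfl⟩
    exact infDist_nonneg
  · exact image_mono fun x ⟨hx, hxA⟩ => ⟨(sub_le_sub_left ht c).trans hx, hxA⟩

lemma infDist_le_superlevelRadius (hA : Bornology.IsBounded A) {x : X} (hx : x ∈ A) :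
    infDist x M ≤ superlevelRadius f M A c (c - f x) :=
  le_csSup (bddAbove_infDist_image hA inter_subset_right) ⟨x, ⟨by simp, hx⟩, rfl⟩

lemma apply_infDist_le_of_apply_superlevelRadius_le {l : ℝ → ℝ} (hl : Monotone l)
    (hlg : ∀ t, 0 ≤ t → l (superlevelRadius f M A c t) ≤ t) (hA : Bornology.IsBounded A)
    {x : X} (hx : x ∈ A) (hfx : f x ≤ c) : l (infDist x M) ≤ c - f x :=
  (hl (infDist_le_superlevelRadius hA hx)).trans (hlg _ (sub_nonneg.2 hfx))

end SuperlevelRadius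

theorem stmt_14_general (d : ℕ) (f : EuclideanSpace ℝ (Fin d) → ℝ)
    (M : Set (EuclideanSpace ℝ (Fin d)))
    (fM lamM rM : ℝ) (hrM : 0 < rM)
    (hconst : ∀ x ∈ M, f x = fM)
    (AM : Set (EuclideanSpace ℝ (Fin d))) (hAMc : IsCompact AM)
    (hAMenv : {x | Metric.infDist x M ≤ rM} ⊆ AM)
    (hmax : ∀ x ∈ AM \ M, f x < fM)
    (g : ℝ → ℝ)
    (hg : ∀ t, g t = sSup ((fun x => Metric.infDist x M) '' ({x | fM - t ≤ f x} ∩ AM))) :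
    g 0 = 0 ∧ MonotoneOn g (Set.Icc 0 ((fM - lamM) / 2)) ∧
      ∀ l : ℝ → ℝ, Continuous l → StrictMono l → (∀ t, 0 ≤ t → l (g t) ≤ t) →
        ∀ x, Metric.infDist x M ≤ rM → l (Metric.infDist x M) ≤ fM - f x := by
  obtain rfl : g = superlevelRadius f M AM fM := funext hg
  have hMA : M ⊆ AM := fun x hx => hAMenv (by simpa [infDist_zero_of_mem hx] using hrM.le)
  refine ⟨superlevelRadius_zero hMA hconst hmax,
    (superlevelRadius_mono hAMc.isBounded).monotoneOn _, ?_⟩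
  intro l _ hl hlg x hx
  exact apply_infDist_le_of_apply_superlevelRadius_le hl.monotone hlg hAMc.isBounded (hAMenv hx)
    (le_of_eq_on_of_lt_on_diff hconst hmax (hAMenv hx))

theorem stmt_14 (d : ℕ) (f : EuclideanSpace ℝ (Fin d) → ℝ) (hf : Continuous f)
    (M : Set (EuclideanSpace ℝ (Fin d))) (hMne : M.Nonempty)
    (hMc : IsCompact M) (hMconn : IsConnected M)
    (fM lamM rM : ℝ) (hrM : 0 < rM) (hlam : lamM < fM)
    (hconst : ∀ x ∈ M, f x = fM)
    (AM : Set (EuclideanSpace ℝ (Fin d))) (hAMc : IsCompact AM)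
    (hAMcc : ∃ x ∈ {y | lamM ≤ f y}, AM = connectedComponentIn {y | lamM ≤ f y} x)
    (hAMenv : {x | Metric.infDist x M ≤ rM} ⊆ AM)
    (hmax : ∀ x ∈ AM \ M, f x < fM)
    (g : ℝ → ℝ)
    (hg : ∀ t, g t = sSup ((fun x => Metric.infDist x M) '' ({x | fM - t ≤ f x} ∩ AM))) :
    g 0 = 0 ∧ MonotoneOn g (Set.Icc 0 ((fM - lamM) / 2)) ∧
      ∀ l : ℝ → ℝ, Continuous l → StrictMono l → (∀ t, 0 ≤ t → l (g t) ≤ t) →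
        ∀ x, Metric.infDist x M ≤ rM → l (Metric.infDist x M) ≤ fM - f x :=
  stmt_14_general d f M fM lamM rM hrM hconst AM hAMc hAMenv hmax g hg
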